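/- arXiv:1912.00763 — 5 statements merged into one kernel-verified Lean document; each statement's English description precedes it below -/
import Mathlib

section
/- Let X be a set, c an outer measure on X, q ≥ 1 an integer, and (u_k)_{k∈ℕ} a sequence of real-valued functions on X such that for every k ∈ ℕ and every real η > 0 one has c({x ∈ X : |u_{k+1}(x) − u_k(x)| ≥ η}) ≤ 2/(η^q · 2^{(q+1)k}). Then for every natural number j ≥ 1 and every real δ > 0, c({x ∈ X : ∃ k ≥ j with u_k(x) − u_j(x) ≥ δ/2}) ≤ 4^{q+1}/(δ^q · 2^j). -/
open MeasureTheory Finset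
open scoped ENNReal

/-!
If `u k x - u j x ≥ δ / 2` for some `k ≥ j`, then telescoping from `j` to `k` forces
`|u (j + n + 1) x - u (j + n) x| ≥ δ / 2 ^ (n + 2)` for some `n`, because
`∑ n, δ / 2 ^ (n + 2) < δ / 2`. By countable subadditivity it remains to sum the hypothesis at
`η = δ / 2 ^ (n + 2)`: the `n`-th term is at most `4 ^ (q + 1) / (δ ^ q 2 ^ j) · 2 ^ (-(n + 1))`,
and these add up to the claimed bound.
-/

lemma sum_range_div_two_pow_add_two (δ : ℝ) (m : ℕ) :
    ∑ i ∈ range m, δ / 2 ^ (i + 2) = δ / 2 - δ / 2 ^ (m + 1) := by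
  induction m with
  | zero => ring
  | succ m ih =>
    rw [sum_range_succ, ih]
    field_simp
    ring

lemma sub_lt_of_abs_sub_succ_lt {v : ℕ → ℝ} {δ : ℝ} (hδ : 0 < δ)
    (hv : ∀ n, |v (n + 1) - v n| < δ / 2 ^ (n + 2)) (m : ℕ) : v m - v 0 < δ / 2 := by
  have hdist : dist (v 0) (v m) ≤ ∑ i ∈ range m, δ / 2 ^ (i + 2) :=
    dist_le_range_sum_of_dist_le m fun {k} _ => by
      rw [Real.dist_eq, abs_sub_comm]
      exact (hv k).le
  calc v m - v 0 ≤ dist (v 0) (v m) := by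
        rw [Real.dist_eq, abs_sub_comm]
        exact le_abs_self _
    _ ≤ δ / 2 - δ / 2 ^ (m + 1) := hdist.trans_eq (sum_range_div_two_pow_add_two δ m)
    _ < δ / 2 := by linarith [show 0 < δ / 2 ^ (m + 1) by positivity]

lemma setOf_exists_sub_ge_subset_iUnion {X : Type*} (u : ℕ → X → ℝ) (j : ℕ) {δ : ℝ}
    (hδ : 0 < δ) :
    {x | ∃ k, k ≥ j ∧ u k x - u j x ≥ δ / 2} ⊆
      ⋃ n, {x | |u (j + n + 1) x - u (j + n) x| ≥ δ / 2 ^ (n + 2)} := by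
  rintro x ⟨k, hjk, hk⟩
  by_contra hx
  simp only [Set.mem_iUnion, Set.mem_ofPred_eq, not_exists, not_le] at hx
  obtain ⟨m, rfl⟩ := Nat.exists_eq_add_of_le hjk
  exact (sub_lt_of_abs_sub_succ_lt (v := fun n => u (j + n) x) hδ hx m).not_ge hk

lemma ENNReal.two_div_pow_mul_two_pow_le (q j n : ℕ) {e : ℝ≥0∞} (he0 : e ≠ 0) (het : e ≠ ∞) :
    2 / (e ^ q * 2 ^ ((q + 1) * (j + n))) ≤
      4 ^ (q + 1) / ((e * 2 ^ (n + 2)) ^ q * 2 ^ j) * 2⁻¹ ^ (n + 1) := by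
  rw [← ENNReal.inv_pow, ← div_eq_mul_inv, ENNReal.le_div_iff_mul_le (by simp) (by simp),
    ENNReal.le_div_iff_mul_le (by simp [he0]) (.inl (by finiteness)),
    ← ENNReal.mul_div_right_comm, ← ENNReal.mul_div_right_comm,
    ENNReal.div_le_iff (by simp [he0]) (by finiteness)]
  have hpow : 2 * 2 ^ (n + 1) * ((2 ^ (n + 2)) ^ q * 2 ^ j) ≤
      4 ^ (q + 1) * 2 ^ ((q + 1) * (j + n)) := by
    rw [show (4 : ℕ) = 2 ^ 2 by rfl, ← pow_succ', ← pow_mul, ← pow_mul, ← pow_add, ← pow_add,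
      ← pow_add]
    exact Nat.pow_le_pow_right two_pos (by nlinarith [Nat.zero_le (q * j)])
  calc 2 * 2 ^ (n + 1) * ((e * 2 ^ (n + 2)) ^ q * 2 ^ j)
      = e ^ q * ((2 * 2 ^ (n + 1) * ((2 ^ (n + 2)) ^ q * 2 ^ j) : ℕ) : ℝ≥0∞) := by
        push_cast
        ring
    _ ≤ e ^ q * ((4 ^ (q + 1) * 2 ^ ((q + 1) * (j + n)) : ℕ) : ℝ≥0∞) :=
        mul_le_mul_of_nonneg_left (Nat.cast_le.2 hpow) (by positivity)
    _ = 4 ^ (q + 1) * (e ^ q * 2 ^ ((q + 1) * (j + n))) := by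
        push_cast
        ring

lemma two_div_ofReal_div_two_pow_le (q j n : ℕ) {δ : ℝ} (hδ : 0 < δ) :
    2 / (ENNReal.ofReal (δ / 2 ^ (n + 2)) ^ q * 2 ^ ((q + 1) * (j + n))) ≤
      4 ^ (q + 1) / (ENNReal.ofReal δ ^ q * 2 ^ j) * 2⁻¹ ^ (n + 1) := by
  have hδ_eq : ENNReal.ofReal δ = ENNReal.ofReal (δ / 2 ^ (n + 2)) * 2 ^ (n + 2) := by
    rw [← ENNReal.ofReal_ofNat, ← ENNReal.ofReal_pow zero_le_two,
      ← ENNReal.ofReal_mul (by positivity), div_mul_cancel₀ _ (by positivity)]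
  rw [hδ_eq]
  exact ENNReal.two_div_pow_mul_two_pow_le q j n (by simp [hδ]) ENNReal.ofReal_ne_top

lemma ENNReal.tsum_inv_two_pow_succ : ∑' n : ℕ, (2⁻¹ : ℝ≥0∞) ^ (n + 1) = 1 := by
  rw [ENNReal.tsum_geometric_add_one, ENNReal.one_sub_inv_two, inv_inv,
    ENNReal.inv_mul_cancel two_ne_zero ENNReal.ofNat_ne_top]

theorem stmt1_general {X : Type*} (c : OuterMeasure X) (q : ℕ)
    (u : ℕ → X → ℝ)
    (h : ∀ k : ℕ, ∀ η : ℝ, 0 < η →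
      c {x | |u (k + 1) x - u k x| ≥ η} ≤
        2 / (ENNReal.ofReal η ^ q * 2 ^ ((q + 1) * k)))
    (j : ℕ) (δ : ℝ) (hδ : 0 < δ) :
    c {x | ∃ k, k ≥ j ∧ u k x - u j x ≥ δ / 2} ≤
      4 ^ (q + 1) / (ENNReal.ofReal δ ^ q * 2 ^ j) := by
  set C := 4 ^ (q + 1) / (ENNReal.ofReal δ ^ q * 2 ^ j)
  calc c {x | ∃ k, k ≥ j ∧ u k x - u j x ≥ δ / 2}
      ≤ c (⋃ n, {x | |u (j + n + 1) x - u (j + n) x| ≥ δ / 2 ^ (n + 2)}) :=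
        measure_mono (setOf_exists_sub_ge_subset_iUnion u j hδ)
    _ ≤ ∑' n, c {x | |u (j + n + 1) x - u (j + n) x| ≥ δ / 2 ^ (n + 2)} :=
        measure_iUnion_le _
    _ ≤ ∑' n : ℕ, C * 2⁻¹ ^ (n + 1) := ENNReal.tsum_le_tsum fun n =>
        (h (j + n) _ (by positivity)).trans (two_div_ofReal_div_two_pow_le q j n hδ)
    _ = C := by rw [ENNReal.tsum_mul_left, ENNReal.tsum_inv_two_pow_succ, mul_one]

/-- Capacity estimate from the proof of the subsolution theorem (Theorem E):
given the dyadic bounds on consecutive differences, the outer measure of the set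
where some `u k` (`k ≥ j`) exceeds `u j` by `δ/2` is at most `4^(q+1)/(δ^q 2^j)`. -/
theorem stmt1 {X : Type*} (c : OuterMeasure X) (q : ℕ) (hq : 1 ≤ q)
    (u : ℕ → X → ℝ)
    (h : ∀ k : ℕ, ∀ η : ℝ, 0 < η →
      c {x | |u (k + 1) x - u k x| ≥ η} ≤
        2 / (ENNReal.ofReal η ^ q * 2 ^ ((q + 1) * k)))
    (j : ℕ) (hj : 1 ≤ j) (δ : ℝ) (hδ : 0 < δ) :
    c {x | ∃ k, k ≥ j ∧ u k x - u j x ≥ δ / 2} ≤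
      4 ^ (q + 1) / (ENNReal.ofReal δ ^ q * 2 ^ j) :=
  stmt1_general c q u h j δ hδ
end

section
/- Let (X, 𝒜) be a measurable space, μ a measure on X, c : Set X → [0,∞] a monotone set function (A ⊆ B implies c(A) ≤ c(B)), m ≥ 1 an integer, and φ : X → ℝ a measurable function with φ(x) < 0 for every x ∈ X. Assume that for every measurable set A ⊆ X and every real t > 0 one has μ(A ∩ {x : −φ(x) < t}) ≤ t^m · c(A). Then for every measurable set K ⊆ X, μ(K) ≤ m·4^m · ∫₀^∞ s^{m−1} c(K ∩ {x : φ(x) ≤ −s}) ds, where the integrand s ↦ c(K ∩ {φ ≤ −s}) is antitone in s (hence measurable) and the integral is the Lebesgue integral over (0, ∞). -/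
/-!
Split `K` into the dyadic layers `{2t ≤ -φ < 4t}`, `t = 2ⁿ`, `n ∈ ℤ`, which cover `K` because
`φ < 0`. Applying the domination hypothesis at level `4t` to `A = K ∩ {φ ≤ -2t}` bounds the
measure of a layer by `(4t)ᵐ c(A)`. For `s ∈ (t, 2t]` the integrand is at least `tᵐ⁻¹ c(A)`, so the
integral over `(t, 2t]` is at least `tᵐ c(A)`, and the layer has measure at most `4ᵐ` times that
integral. The intervals `(t, 2t]` are pairwise disjoint, so summing over `n` gives the estimate.
-/

open MeasureTheory Set

open scoped ENNReal Function

theorem ofReal_pow_mul_sub_mul_le_setLIntegral_Ioc {a b : ℝ} (ha : 0 ≤ a) (n : ℕ)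
    {g : ℝ → ℝ≥0∞} {C : ℝ≥0∞} (hg : ∀ s ∈ Ioc a b, C ≤ g s) :
    ENNReal.ofReal (a ^ n * (b - a)) * C ≤ ∫⁻ s in Ioc a b, ENNReal.ofReal (s ^ n) * g s :=
  calc ENNReal.ofReal (a ^ n * (b - a)) * C
      = ∫⁻ _ in Ioc a b, ENNReal.ofReal (a ^ n) * C := by
        rw [setLIntegral_const, Real.volume_Ioc, ENNReal.ofReal_mul (by positivity)]
        ring
    _ ≤ ∫⁻ s in Ioc a b, ENNReal.ofReal (s ^ n) * g s :=
        setLIntegral_mono' measurableSet_Ioc fun s hs =>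
          mul_le_mul' (ENNReal.ofReal_le_ofReal (pow_le_pow_left₀ ha hs.1.le n)) (hg s hs)

theorem exists_mem_Ico_two_mul_zpow_four_mul_zpow {y : ℝ} (hy : 0 < y) :
    ∃ n : ℤ, y ∈ Ico (2 * 2 ^ n) (4 * 2 ^ n) := by
  obtain ⟨n, hn⟩ := exists_mem_Ico_zpow (half_pos hy) one_lt_two
  rw [zpow_add_one₀ two_ne_zero] at hn
  exact ⟨n, by linarith [hn.1], by linarith [hn.2]⟩

theorem pairwise_disjoint_Ioc_zpow_two_mul_zpow :
    Pairwise (Disjoint on fun n : ℤ => Ioc ((2 : ℝ) ^ n) (2 * 2 ^ n)) := by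
  simpa only [Order.succ_eq_add_one, zpow_add_one₀ (two_ne_zero' ℝ), mul_comm]
    using (zpow_right_mono₀ (one_le_two : (1 : ℝ) ≤ 2)).pairwise_disjoint_on_Ioc_succ

theorem measure_inter_neg_mem_Ico_le_four_pow_mul_setLIntegral {X : Type*} [MeasurableSpace X]
    {μ : Measure X} {c : Set X → ℝ≥0∞} (hc : Monotone c) {m : ℕ} (hm : m ≠ 0) {φ : X → ℝ}
    (hφ : Measurable φ)
    (hdom : ∀ A : Set X, MeasurableSet A → ∀ t : ℝ, 0 < t →
      μ (A ∩ {x | -φ x < t}) ≤ ENNReal.ofReal (t ^ m) * c A)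
    {K : Set X} (hK : MeasurableSet K) {t : ℝ} (ht : 0 < t) :
    μ (K ∩ {x | -φ x ∈ Ico (2 * t) (4 * t)}) ≤
      4 ^ m * ∫⁻ s in Ioc t (2 * t), ENNReal.ofReal (s ^ (m - 1)) * c (K ∩ {x | φ x ≤ -s}) := by
  set A := K ∩ {x | φ x ≤ -(2 * t)}
  have hsub : K ∩ {x | -φ x ∈ Ico (2 * t) (4 * t)} ⊆ A ∩ {x | -φ x < 4 * t} :=
    fun x ⟨hxK, hx⟩ => ⟨⟨hxK, show φ x ≤ -(2 * t) by linarith [hx.1]⟩, hx.2⟩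
  have hlayer : μ (K ∩ {x | -φ x ∈ Ico (2 * t) (4 * t)}) ≤ ENNReal.ofReal ((4 * t) ^ m) * c A :=
    (measure_mono hsub).trans
      (hdom A (hK.inter (measurableSet_le hφ measurable_const)) _ (by positivity))
  have hint : ENNReal.ofReal (t ^ m) * c A ≤
      ∫⁻ s in Ioc t (2 * t), ENNReal.ofReal (s ^ (m - 1)) * c (K ∩ {x | φ x ≤ -s}) := by
    have htm : t ^ (m - 1) * (2 * t - t) = t ^ m := by
      rw [two_mul, add_sub_cancel_right, pow_sub_one_mul hm]
    rw [← htm]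
    refine ofReal_pow_mul_sub_mul_le_setLIntegral_Ioc ht.le _ fun s hs => hc ?_
    exact inter_subset_inter_right K fun x (hx : φ x ≤ -(2 * t)) =>
      show φ x ≤ -s by linarith [hs.2]
  calc μ (K ∩ {x | -φ x ∈ Ico (2 * t) (4 * t)})
      ≤ 4 ^ m * (ENNReal.ofReal (t ^ m) * c A) := by
        rwa [mul_pow, ENNReal.ofReal_mul (by positivity), ENNReal.ofReal_pow zero_le_four,
          ENNReal.ofReal_ofNat, mul_assoc] at hlayer
    _ ≤ _ := by gcongr

/-- Abstract form of the key estimate in the proof of Proposition 8: if the measure of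
`A ∩ {-φ < t}` is dominated by `t^m c(A)` for every measurable `A` and `t > 0`, then
`μ(K) ≤ m 4^m ∫₀^∞ s^{m-1} c(K ∩ {φ ≤ -s}) ds`. -/
theorem stmt2 {X : Type*} [MeasurableSpace X] (μ : Measure X)
    (c : Set X → ENNReal) (hc : ∀ A B : Set X, A ⊆ B → c A ≤ c B)
    (m : ℕ) (hm : 1 ≤ m) (φ : X → ℝ) (hφmeas : Measurable φ) (hφneg : ∀ x, φ x < 0)
    (hdom : ∀ A : Set X, MeasurableSet A → ∀ t : ℝ, 0 < t →
      μ (A ∩ {x | -φ x < t}) ≤ ENNReal.ofReal (t ^ m) * c A)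
    (K : Set X) (hK : MeasurableSet K) :
    μ K ≤ (m : ENNReal) * 4 ^ m *
      ∫⁻ s in Ioi (0 : ℝ), ENNReal.ofReal (s ^ (m - 1)) * c (K ∩ {x | φ x ≤ -s}) := by
  set f : ℝ → ℝ≥0∞ := fun s => ENNReal.ofReal (s ^ (m - 1)) * c (K ∩ {x | φ x ≤ -s})
  have hcover : K ⊆ ⋃ n : ℤ, K ∩ {x | -φ x ∈ Ico (2 * 2 ^ n) (4 * 2 ^ n)} := fun x hx =>
    have ⟨n, hn⟩ := exists_mem_Ico_two_mul_zpow_four_mul_zpow (neg_pos.2 (hφneg x))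
    mem_iUnion.2 ⟨n, hx, hn⟩
  calc μ K ≤ ∑' n : ℤ, μ (K ∩ {x | -φ x ∈ Ico (2 * 2 ^ n) (4 * 2 ^ n)}) :=
        (measure_mono hcover).trans (measure_iUnion_le _)
    _ ≤ ∑' n : ℤ, 4 ^ m * ∫⁻ s in Ioc (2 ^ n) (2 * 2 ^ n), f s :=
        ENNReal.tsum_le_tsum fun n =>
          measure_inter_neg_mem_Ico_le_four_pow_mul_setLIntegral (fun A B => hc A B)
            (by omega) hφmeas hdom hK (zpow_pos two_pos n)
    _ = 4 ^ m * ∫⁻ s in ⋃ n : ℤ, Ioc (2 ^ n) (2 * 2 ^ n), f s := by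
        rw [ENNReal.tsum_mul_left,
          lintegral_iUnion (fun _ => measurableSet_Ioc) pairwise_disjoint_Ioc_zpow_two_mul_zpow]
    _ ≤ 4 ^ m * ∫⁻ s in Ioi 0, f s := by
        gcongr
        exact iUnion_subset fun n s hs => (zpow_pos two_pos n).trans hs.1
    _ ≤ m * 4 ^ m * ∫⁻ s in Ioi 0, f s := by
        gcongr
        exact le_mul_of_one_le_left' (by exact_mod_cast hm)
end

section
/- Let X be a locally compact metric space, (f_j)_{j∈ℕ} a nondecreasing sequence of lower semicontinuous functions f_j : X → [0, ∞], and f = ⨆_j f_j its pointwise supremum. Let μ_j, μ, Θ be Borel measures on X that are finite on compact sets, and assume that for every continuous compactly supported function g : X → [0, ∞) one has ∫ g dμ_j → ∫ g dμ and ∫ g·f_j dμ_j → ∫ g dΘ as j → ∞ (limits in [0, ∞]). Then for every continuous compactly supported g : X → [0, ∞), ∫ g·f dμ ≤ ∫ g dΘ; that is, the measure f·μ is dominated by Θ. -/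
open MeasureTheory Filter

/-- Moreau–Yosida type approximation: a lower semicontinuous `[0,∞]`-valued function on a
metric space is the pointwise increasing supremum of continuous `ℝ≥0`-valued functions. -/
lemma lsc_approx_aux {X : Type*} [MetricSpace X] (F : X → ENNReal)
    (hF : LowerSemicontinuous F) :
    ∃ φ : ℕ → X → NNReal, (∀ n, Continuous (φ n)) ∧
      (∀ n x, (φ n x : ENNReal) ≤ F x) ∧
      (Monotone fun n => fun x => (φ n x : ENNReal)) ∧
      (∀ x, (⨆ n, (φ n x : ENNReal)) = F x) := by
  set Φ : ℕ → X → ENNReal := fun n x => ⨅ y, min (F y) n + n * edist x y with hΦ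
  have hle : ∀ n x, Φ n x ≤ min (F x) n := fun n x => by
    refine iInf_le_of_le x ?_
    simp
  have hlen : ∀ n x, Φ n x ≤ n := fun n x => (hle n x).trans (min_le_right _ _)
  have hne : ∀ n x, Φ n x ≠ ⊤ := fun n x =>
    ((hlen n x).trans_lt (ENNReal.natCast_lt_top n)).ne
  have hineq : ∀ n x z, Φ n x ≤ Φ n z + n * edist x z := by
    intro n x z
    rw [hΦ]
    simp only
    rw [ENNReal.iInf_add]
    refine le_iInf fun y => iInf_le_of_le y ?_
    have h1 : edist x y ≤ edist x z + edist z y := edist_triangle x z y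
    calc min (F y) n + n * edist x y
        ≤ min (F y) n + n * (edist x z + edist z y) := by gcongr
      _ = min (F y) n + n * edist z y + n * edist x z := by ring
  -- the real-valued version is Lipschitz
  have hcontR : ∀ n, Continuous fun x => (Φ n x).toReal := by
    intro n
    have hlip : LipschitzWith n fun x => (Φ n x).toReal := by
      apply LipschitzWith.of_le_add_mul
      intro x z
      have h1 := hineq n x z
      have h2 : (Φ n z + n * edist x z).toReal
          = (Φ n z).toReal + (n : ℝ) * dist x z := by
        rw [ENNReal.toReal_add (hne n z)]
        · rw [ENNReal.toReal_mul, edist_dist, ENNReal.toReal_ofReal dist_nonneg]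
          simp
        · exact ENNReal.mul_ne_top (ENNReal.natCast_ne_top n) (edist_ne_top x z)
      have h3 := ENNReal.toReal_mono (by
        rw [Ne, ENNReal.add_eq_top]
        push_neg
        exact ⟨hne n z, ENNReal.mul_ne_top (ENNReal.natCast_ne_top n) (edist_ne_top x z)⟩) h1
      rw [h2] at h3
      simpa using h3
    exact hlip.continuous
  refine ⟨fun n x => (Φ n x).toNNReal, ?_, ?_, ?_, ?_⟩
  · intro n
    show Continuous fun x => (Φ n x).toNNReal
    have : (fun x => (Φ n x).toNNReal) = fun x => Real.toNNReal ((Φ n x).toReal) := by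
      funext x
      rw [ENNReal.toReal, Real.toNNReal_coe]
    rw [this]
    exact continuous_real_toNNReal.comp (hcontR n)
  · intro n x
    rw [ENNReal.coe_toNNReal (hne n x)]
    exact (hle n x).trans (min_le_left _ _)
  · intro n m hnm
    intro x
    show ((Φ n x).toNNReal : ENNReal) ≤ ((Φ m x).toNNReal : ENNReal)
    rw [ENNReal.coe_toNNReal (hne n x), ENNReal.coe_toNNReal (hne m x)]
    refine iInf_mono fun y => ?_
    gcongr <;> exact_mod_cast hnm
  · intro x
    refine le_antisymm (iSup_le fun n => ?_) ?_
    · rw [ENNReal.coe_toNNReal (hne n x)]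
      exact (hle n x).trans (min_le_left _ _)
    · refine ENNReal.le_of_forall_nnreal_lt fun r hr => ?_
      obtain ⟨δ, hδ, hball⟩ : ∃ δ > 0, ∀ ⦃y⦄, dist y x < δ → (r : ENNReal) < F y :=
        Metric.eventually_nhds_iff.mp (hF x r hr)
      obtain ⟨n, hn⟩ := exists_nat_ge (max (r : ℝ) ((r : ℝ) / δ))
      refine le_iSup_of_le n ?_
      rw [ENNReal.coe_toNNReal (hne n x)]
      refine le_iInf fun y => ?_
      have hrn : (r : ENNReal) ≤ (n : ENNReal) := by
        have h : r ≤ (n : NNReal) := by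
          exact_mod_cast le_trans (le_max_left _ _) hn
        exact_mod_cast h
      by_cases hy : dist y x < δ
      · calc (r : ENNReal) = min (r : ENNReal) n := (min_eq_left hrn).symm
          _ ≤ min (F y) n := by gcongr; exact (hball hy).le
          _ ≤ min (F y) n + n * edist x y := le_self_add
      · have h1 : ENNReal.ofReal δ ≤ edist x y := by
          rw [edist_dist, dist_comm]
          exact ENNReal.ofReal_le_ofReal (not_lt.1 hy)
        have h2 : (r : ENNReal) ≤ n * ENNReal.ofReal δ := by
          have hrd : (r : ℝ) ≤ n * δ := by
            have h3 : (r : ℝ) / δ ≤ n := le_trans (le_max_right _ _) hn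
            calc (r : ℝ) = (r : ℝ) / δ * δ := by field_simp
              _ ≤ n * δ := by gcongr
          calc (r : ENNReal) = ENNReal.ofReal (r : ℝ) := ENNReal.ofReal_coe_nnreal.symm
            _ ≤ ENNReal.ofReal ((n : ℝ) * δ) := ENNReal.ofReal_le_ofReal hrd
            _ = ENNReal.ofReal (n : ℝ) * ENNReal.ofReal δ :=
                ENNReal.ofReal_mul (by positivity)
            _ = n * ENNReal.ofReal δ := by rw [ENNReal.ofReal_natCast]
        calc (r : ENNReal) ≤ n * edist x y := h2.trans (by gcongr)
          _ ≤ min (F y) n + n * edist x y := le_add_self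

/-- Abstract form of the first half of the proof of Theorem 1: if `f j` increases to `f`,
`μ j → μ` vaguely and `g · f j · μ j → Θ` vaguely, then `g · f · μ ≤ g · Θ` for every
nonnegative continuous compactly supported `g`. -/
theorem stmt3 {X : Type*} [MetricSpace X] [LocallyCompactSpace X]
    [MeasurableSpace X] [BorelSpace X]
    (f : ℕ → X → ENNReal) (hlsc : ∀ j, LowerSemicontinuous (f j))
    (hmono : Monotone f)
    (μs : ℕ → Measure X) (μ Θ : Measure X)
    (hμs : ∀ j, IsFiniteMeasureOnCompacts (μs j))
    (hμ : IsFiniteMeasureOnCompacts μ)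
    (hΘ : IsFiniteMeasureOnCompacts Θ)
    (hconv1 : ∀ g : X → NNReal, Continuous g → HasCompactSupport g →
      Tendsto (fun j => ∫⁻ x, (g x : ENNReal) ∂(μs j)) atTop
        (nhds (∫⁻ x, (g x : ENNReal) ∂μ)))
    (hconv2 : ∀ g : X → NNReal, Continuous g → HasCompactSupport g →
      Tendsto (fun j => ∫⁻ x, (g x : ENNReal) * f j x ∂(μs j)) atTop
        (nhds (∫⁻ x, (g x : ENNReal) ∂Θ)))
    (g : X → NNReal) (hg : Continuous g) (hgsupp : HasCompactSupport g) :
    ∫⁻ x, (g x : ENNReal) * (⨆ j, f j x) ∂μ ≤ ∫⁻ x, (g x : ENNReal) ∂Θ := by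
  -- Step 1: for each fixed `k`, `∫ g · f k dμ ≤ ∫ g dΘ`.
  have key : ∀ k, ∫⁻ x, (g x : ENNReal) * f k x ∂μ ≤ ∫⁻ x, (g x : ENNReal) ∂Θ := by
    intro k
    obtain ⟨φ, hφc, hφle, hφmono, hφsup⟩ := lsc_approx_aux (f k) (hlsc k)
    -- for each `n`, test against the continuous compactly supported function `g * φ n`
    have hn : ∀ n, ∫⁻ x, (g x : ENNReal) * (φ n x : ENNReal) ∂μ
        ≤ ∫⁻ x, (g x : ENNReal) ∂Θ := by
      intro n
      set ψ : X → NNReal := fun x => g x * φ n x with hψ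
      have hψc : Continuous ψ := hg.mul (hφc n)
      have hψsupp : HasCompactSupport ψ := hgsupp.mul_right
      have h1 := hconv1 ψ hψc hψsupp
      have h2 := hconv2 g hg hgsupp
      have hcoe : ∀ ν : Measure X, ∫⁻ y, (ψ y : ENNReal) ∂ν
          = ∫⁻ y, (g y : ENNReal) * (φ n y : ENNReal) ∂ν := by
        intro ν
        refine lintegral_congr fun y => ?_
        rw [hψ]
        push_cast
        ring
      rw [hcoe μ] at h1
      refine le_of_tendsto_of_tendsto h1 h2 ?_
      filter_upwards [eventually_ge_atTop k] with j hj
      rw [hcoe (μs j)]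
      refine lintegral_mono fun y => ?_
      have : (φ n y : ENNReal) ≤ f j y := (hφle n y).trans (hmono hj y)
      gcongr
    -- monotone convergence in `n`
    have hmct : ∫⁻ x, (g x : ENNReal) * f k x ∂μ
        = ⨆ n, ∫⁻ x, (g x : ENNReal) * (φ n x : ENNReal) ∂μ := by
      rw [← lintegral_iSup]
      · refine lintegral_congr fun x => ?_
        rw [← ENNReal.mul_iSup, hφsup x]
      · exact fun n => (hg.measurable.coe_nnreal_ennreal).mul
          ((hφc n).measurable.coe_nnreal_ennreal)
      · intro n m hnm x
        exact mul_le_mul_right (hφmono hnm x) _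
    rw [hmct]
    exact iSup_le hn
  -- Step 2: monotone convergence in `k`.
  have hmct2 : ∫⁻ x, (g x : ENNReal) * (⨆ j, f j x) ∂μ
      = ⨆ k, ∫⁻ x, (g x : ENNReal) * f k x ∂μ := by
    rw [← lintegral_iSup]
    · refine lintegral_congr fun x => ?_
      rw [← ENNReal.mul_iSup]
    · exact fun k => (hg.measurable.coe_nnreal_ennreal).mul (hlsc k).measurable
    · intro n m hnm x
      exact mul_le_mul_right (hmono hnm x) _
  rw [hmct2]
  exact iSup_le key
end

section
/- Let (X, 𝒜) be a measurable space, (μ_j)_{j∈ℕ} and μ finite measures on X, and suppose there is a sequence of reals ε_j → 0 such that |μ_j(A) − μ(A)| ≤ ε_j for every measurable set A and every j (convergence in total variation). Let f_j : X → [0, ∞] be measurable functions. Then ∫ (liminf_j f_j) dμ ≤ liminf_j ∫ f_j dμ_j. -/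
set_option maxHeartbeats 800000


open MeasureTheory Filter
open scoped ENNReal


private lemma liminf_add_le_of_tendsto_zero {a c : ℕ → ℝ≥0∞}
    (hc : Tendsto c atTop (nhds 0)) :
    liminf (fun j => a j + c j) atTop ≤ liminf a atTop := by
  refine ENNReal.le_of_forall_pos_le_add fun δ hδ _ => ?_
  have hev : ∀ᶠ j in atTop, c j ≤ (δ : ℝ≥0∞) :=
    (hc.eventually_lt_const (by exact_mod_cast hδ : (0 : ℝ≥0∞) < δ)).mono
      fun j h => h.le
  calc liminf (fun j => a j + c j) atTop
      ≤ liminf (fun j => a j + (δ : ℝ≥0∞)) atTop :=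
        liminf_le_liminf (hev.mono fun j h => add_le_add le_rfl h)
    _ = liminf a atTop + (δ : ℝ≥0∞) :=
        liminf_add_const atTop a _ (by isBoundedDefault) (by isBoundedDefault)

/-- Fatou's lemma for a sequence of finite measures converging in total variation,
as used in the proof of the subsolution theorem (Theorem E). -/
theorem stmt4 {X : Type*} [MeasurableSpace X]
    (μs : ℕ → Measure X) (μ : Measure X)
    (hμs : ∀ j, IsFiniteMeasure (μs j)) (hμ : IsFiniteMeasure μ)
    (ε : ℕ → ℝ) (hε : Tendsto ε atTop (nhds 0))
    (hTV : ∀ j, ∀ A : Set X, MeasurableSet A →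
      |(μs j A).toReal - (μ A).toReal| ≤ ε j)
    (f : ℕ → X → ENNReal) (hf : ∀ j, Measurable (f j)) :
    ∫⁻ x, liminf (fun j => f j x) atTop ∂μ ≤
      liminf (fun j => ∫⁻ x, f j x ∂(μs j)) atTop := by
  classical
  haveI := hμ
  haveI := hμs
  -- Step 1: for each j, there is a "defect" measure ν j with μ ≤ μs j + ν j
  -- and total mass at most ε j.
  have key : ∀ j, ∃ ν : Measure X, μ ≤ μs j + ν ∧ ν Set.univ ≤ ENNReal.ofReal (ε j) := by
    intro j
    obtain ⟨S, hS, hpos, hneg⟩ := hahn_decomposition (μ := μ) (ν := μs j)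
    have hres_le : (μs j).restrict S ≤ μ.restrict S := by
      rw [Measure.le_iff]
      intro t ht
      rw [Measure.restrict_apply ht, Measure.restrict_apply ht]
      exact hpos _ (ht.inter hS) Set.inter_subset_right
    refine ⟨μ.restrict S - (μs j).restrict S, ?_, ?_⟩
    · rw [Measure.le_iff]
      intro A hA
      have hsub : (μ.restrict S - (μs j).restrict S) A
          = μ (A ∩ S) - μs j (A ∩ S) := by
        rw [Measure.sub_apply hA hres_le, Measure.restrict_apply hA,
          Measure.restrict_apply hA]
      have h1 : μ (A ∩ S) = μs j (A ∩ S) + (μ (A ∩ S) - μs j (A ∩ S)) := by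
        rw [add_tsub_cancel_of_le (hpos _ (hA.inter hS) Set.inter_subset_right)]
      have h2 : μ (A \ S) ≤ μs j (A \ S) :=
        hneg _ (hA.diff hS) (Set.diff_subset_iff.mpr (by simp [Set.union_comm]))
      calc μ A = μ (A ∩ S) + μ (A \ S) := (measure_inter_add_diff A hS).symm
        _ ≤ (μs j (A ∩ S) + (μ (A ∩ S) - μs j (A ∩ S))) + μs j (A \ S) := by
            rw [← h1]; exact add_le_add le_rfl h2
        _ = (μs j (A ∩ S) + μs j (A \ S)) + (μ (A ∩ S) - μs j (A ∩ S)) := by ring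
        _ = μs j A + (μ (A ∩ S) - μs j (A ∩ S)) := by
            rw [measure_inter_add_diff A hS]
        _ = (μs j + (μ.restrict S - (μs j).restrict S)) A := by
            rw [Measure.add_apply, hsub]
    · have hsub : (μ.restrict S - (μs j).restrict S) Set.univ = μ S - μs j S := by
        rw [Measure.sub_apply MeasurableSet.univ hres_le]
        simp [Measure.restrict_apply_univ]
      rw [hsub]
      have hle : μs j S ≤ μ S := hpos _ hS le_rfl
      have htr : (μ S - μs j S).toReal ≤ ε j := by
        rw [ENNReal.toReal_sub_of_le hle (measure_ne_top μ S)]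
        have := hTV j S hS
        have h := abs_le.mp this
        linarith [h.1]
      calc μ S - μs j S = ENNReal.ofReal (μ S - μs j S).toReal := by
            rw [ENNReal.ofReal_toReal]
            exact (tsub_le_self.trans_lt (measure_lt_top μ S)).ne
        _ ≤ ENNReal.ofReal (ε j) := ENNReal.ofReal_le_ofReal htr
  choose ν hνle hνmass using key
  set g : X → ℝ≥0∞ := fun x => liminf (fun j => f j x) atTop with hgdef
  have hgm : Measurable g := Measurable.liminf hf
  -- Step 2: truncated comparison
  have key2 : ∀ M : ℕ, ∫⁻ x, min (g x) M ∂μ ≤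
      liminf (fun j => ∫⁻ x, f j x ∂(μs j)) atTop := by
    intro M
    -- pointwise: min (liminf, M) ≤ liminf of min
    have h1 : ∀ x, min (g x) M ≤ liminf (fun j => min (f j x) M) atTop := by
      intro x
      have hmono : Monotone (fun y : ℝ≥0∞ => min y (M : ℝ≥0∞)) :=
        fun a b hab => min_le_min hab le_rfl
      have hcont : ContinuousAt (fun y : ℝ≥0∞ => min y (M : ℝ≥0∞))
          (liminf (fun j => f j x) atTop) :=
        (continuous_min.comp (continuous_id.prodMk continuous_const)).continuousAt
      have := hmono.map_liminf_of_continuousAt (F := atTop) (fun j => f j x) hcont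
      simp only [hgdef, Function.comp] at this ⊢
      exact this.le
    have h2 : ∀ j, ∫⁻ x, min (f j x) M ∂μ ≤
        ∫⁻ x, f j x ∂(μs j) + M * ENNReal.ofReal (ε j) := by
      intro j
      calc ∫⁻ x, min (f j x) M ∂μ ≤ ∫⁻ x, min (f j x) M ∂(μs j + ν j) :=
            lintegral_mono' (hνle j) le_rfl
        _ = ∫⁻ x, min (f j x) M ∂(μs j) + ∫⁻ x, min (f j x) M ∂(ν j) :=
            lintegral_add_measure _ _ _
        _ ≤ ∫⁻ x, f j x ∂(μs j) + M * ENNReal.ofReal (ε j) := by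
            refine add_le_add (lintegral_mono fun x => min_le_left _ _) ?_
            calc ∫⁻ x, min (f j x) M ∂(ν j) ≤ ∫⁻ _, (M : ℝ≥0∞) ∂(ν j) :=
                  lintegral_mono fun x => min_le_right _ _
              _ = M * ν j Set.univ := lintegral_const _
              _ ≤ M * ENNReal.ofReal (ε j) := mul_le_mul_right (hνmass j) _
    have hlim0 : limsup (fun j => (M : ℝ≥0∞) * ENNReal.ofReal (ε j)) atTop = 0 := by
      have h0 : Tendsto (fun j => (M : ℝ≥0∞) * ENNReal.ofReal (ε j)) atTop (nhds 0) := by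
        have := ENNReal.tendsto_ofReal (a := (0:ℝ)) hε
        simp only [ENNReal.ofReal_zero] at this
        have := ENNReal.Tendsto.const_mul this (Or.inr (by simp : (M : ℝ≥0∞) ≠ ⊤))
        simpa using this
      exact h0.limsup_eq
    calc ∫⁻ x, min (g x) M ∂μ
        ≤ ∫⁻ x, liminf (fun j => min (f j x) M) atTop ∂μ := lintegral_mono h1
      _ ≤ liminf (fun j => ∫⁻ x, min (f j x) M ∂μ) atTop :=
          lintegral_liminf_le fun j => (hf j).min measurable_const
      _ ≤ liminf (fun j => ∫⁻ x, f j x ∂(μs j) + M * ENNReal.ofReal (ε j)) atTop :=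
          liminf_le_liminf (Eventually.of_forall h2)
      _ ≤ liminf (fun j => ∫⁻ x, f j x ∂(μs j)) atTop := by
          have h0 : Tendsto (fun j => (M : ℝ≥0∞) * ENNReal.ofReal (ε j)) atTop (nhds 0) := by
            have := ENNReal.tendsto_ofReal (a := (0:ℝ)) hε
            simp only [ENNReal.ofReal_zero] at this
            have := ENNReal.Tendsto.const_mul this (Or.inr (by simp : (M : ℝ≥0∞) ≠ ⊤))
            simpa using this
          exact liminf_add_le_of_tendsto_zero h0
  -- Step 3: monotone convergence in the truncation level
  have hsup : ∀ x, ⨆ M : ℕ, min (g x) M = g x := by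
    intro x
    apply le_antisymm (iSup_le fun M => min_le_left _ _)
    rcases eq_or_ne (g x) ∞ with h | h
    · rw [h]
      calc (⊤ : ℝ≥0∞) = ⨆ M : ℕ, (M : ℝ≥0∞) := (ENNReal.iSup_natCast).symm
        _ ≤ ⨆ M : ℕ, min (⊤ : ℝ≥0∞) M := by
            exact iSup_mono fun M => by simp
    · obtain ⟨M, hM⟩ := ENNReal.exists_nat_gt h
      exact le_trans (by simp [min_eq_left hM.le]) (le_iSup (fun M : ℕ => min (g x) M) M)
  calc ∫⁻ x, g x ∂μ = ∫⁻ x, ⨆ M : ℕ, min (g x) M ∂μ := by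
        simp_rw [hsup]
    _ = ⨆ M : ℕ, ∫⁻ x, min (g x) M ∂μ :=
        lintegral_iSup (fun M => hgm.min measurable_const)
          (fun a b hab x => min_le_min le_rfl (by exact_mod_cast Nat.cast_le.mpr hab))
    _ ≤ liminf (fun j => ∫⁻ x, f j x ∂(μs j)) atTop := iSup_le key2
end

section
/- Let X be a metric space, c : Set X → [0, ∞] a set function, M ≥ 0 a constant, and ν, (ν_j)_{j∈ℕ} finite Borel measures on X such that ν_j(A) ≤ M·c(A) and ν(A) ≤ M·c(A) for every Borel set A and every j. Let u : X → ℝ be a bounded Borel measurable function that is c-quasicontinuous. If ∫ φ dν_j → ∫ φ dν for every bounded continuous function φ : X → ℝ, then ∫ g·u dν_j → ∫ g·u dν for every bounded continuous function g : X → ℝ. -/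
/-!
Off an open set `G` of small capacity, the quasicontinuous function `g u` is continuous, so by
Tietze it agrees on `Gᶜ` with a continuous function `φ` having the same bound. Since every measure
in play is dominated by `M c`, the integrals of `g u` and `φ` differ by at most
`2 ‖g u‖_∞ M c(G)` uniformly in the measure, and the integrals of `φ` converge by assumption.
-/

open MeasureTheory Filter

/-- A function `h` is `c`-quasicontinuous if for every `ε > 0` there is an open set `G`
with `c G < ε` such that the restriction of `h` to the complement of `G` is continuous. -/
def QuasiContinuous {X : Type*} [TopologicalSpace X] (c : Set X → ENNReal) (h : X → ℝ) : Prop :=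
  ∀ ε : ENNReal, 0 < ε → ∃ G : Set X, IsOpen G ∧ c G < ε ∧ ContinuousOn h Gᶜ

open Topology Set

theorem Filter.Tendsto.of_forall_approx {α E : Type*} [PseudoMetricSpace E] {l : Filter α}
    {a : α → E} {y : E}
    (h : ∀ ε > 0, ∃ (b : α → E) (z : E), Tendsto b l (𝓝 z) ∧
      (∀ᶠ j in l, dist (a j) (b j) ≤ ε) ∧ dist z y ≤ ε) :
    Tendsto a l (𝓝 y) := by
  refine Metric.tendsto_nhds.2 fun ε hε => ?_
  obtain ⟨b, z, hb, hab, hzy⟩ := h (ε / 4) (by positivity)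
  filter_upwards [hab, Metric.tendsto_nhds.1 hb (ε / 4) (by positivity)] with j hj hbj
  calc dist (a j) y ≤ dist (a j) (b j) + dist (b j) z + dist z y := dist_triangle4 _ _ _ _
    _ < ε := by linarith

theorem exists_continuous_eqOn_abs_le {X : Type*} [TopologicalSpace X] [NormalSpace X]
    {s : Set X} (hs : IsClosed s) {u : X → ℝ} (hu : ContinuousOn u s) {B : ℝ} (hB₀ : 0 ≤ B)
    (hB : ∀ x ∈ s, |u x| ≤ B) :
    ∃ φ : X → ℝ, Continuous φ ∧ EqOn φ u s ∧ ∀ x, |φ x| ≤ B := by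
  obtain ⟨φ, hφB, hφu⟩ := ContinuousMap.exists_restrict_eq_forall_mem_of_closed
    ⟨s.domRestrict u, hu.domRestrict⟩ (t := Icc (-B) B) (fun x => abs_le.1 (hB x x.2))
    (nonempty_Icc.2 (by linarith)) hs
  exact ⟨φ, φ.continuous, fun x hx => ContinuousMap.congr_fun hφu ⟨x, hx⟩,
    fun x => abs_le.2 (hφB x)⟩

theorem norm_integral_sub_le_of_eqOn_compl {X E : Type*} [MeasurableSpace X]
    [NormedAddCommGroup E] [NormedSpace ℝ E] {μ : Measure X} {f φ : X → E}
    (hf : Integrable f μ) (hφ : Integrable φ μ) {G : Set X} (hG : μ G < ⊤)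
    (heq : EqOn f φ Gᶜ) {C : ℝ} (hC : ∀ x ∈ G, ‖f x - φ x‖ ≤ C) :
    ‖∫ x, f x ∂μ - ∫ x, φ x ∂μ‖ ≤ C * μ.real G := by
  have hvanish : ∀ x ∉ G, f x - φ x = 0 := fun x hx => sub_eq_zero.2 (heq hx)
  rw [← integral_sub hf hφ, ← setIntegral_eq_integral_of_forall_compl_eq_zero hvanish]
  exact norm_setIntegral_le_of_norm_le_const hG hC

theorem QuasiContinuous.continuous_mul {X : Type*} [TopologicalSpace X] {c : Set X → ENNReal}
    {u g : X → ℝ} (hu : QuasiContinuous c u) (hg : Continuous g) :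
    QuasiContinuous c (fun x => g x * u x) := fun ε hε =>
  (hu ε hε).imp fun _ ⟨hG, hcG, hcont⟩ => ⟨hG, hcG, hg.continuousOn.mul hcont⟩

theorem measureReal_le_of_le_mul {X : Type*} [MeasurableSpace X] {μ : Measure X}
    {A : Set X} {M δ : ℝ} {a : ENNReal} (hM : 0 ≤ M)
    (hμ : μ A ≤ ENNReal.ofReal M * a) (ha : a < ENNReal.ofReal δ) :
    μ.real A ≤ M * δ := by
  have hδ : 0 ≤ δ := ENNReal.ofReal_pos.1 (ha.trans_le' bot_le) |>.le
  refine ENNReal.toReal_le_of_le_ofReal (by positivity) (hμ.trans ?_)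
  rw [ENNReal.ofReal_mul hM]
  gcongr

theorem QuasiContinuous.exists_continuous_dist_integral_le {X : Type*} [MetricSpace X]
    [MeasurableSpace X] [BorelSpace X] {c : Set X → ENNReal} {M : ℝ} (hM : 0 ≤ M) {f : X → ℝ}
    (hqc : QuasiContinuous c f) (hf : Measurable f) (hfb : ∃ C, ∀ x, |f x| ≤ C)
    {η : ℝ} (hη : 0 < η) :
    ∃ φ : X → ℝ, Continuous φ ∧ (∃ C, ∀ x, |φ x| ≤ C) ∧
      ∀ μ : Measure X, IsFiniteMeasure μ →
        (∀ A, MeasurableSet A → μ A ≤ ENNReal.ofReal M * c A) →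
          dist (∫ x, f x ∂μ) (∫ x, φ x ∂μ) ≤ η := by
  obtain ⟨B, hB₀, hB⟩ : ∃ B, 0 ≤ B ∧ ∀ x, |f x| ≤ B :=
    let ⟨C, hC⟩ := hfb
    ⟨max C 0, le_max_right _ _, fun x => (hC x).trans (le_max_left _ _)⟩
  obtain ⟨δ, hδ, hδη⟩ := exists_pos_mul_lt hη (2 * B * M)
  obtain ⟨G, hGo, hcG, hcont⟩ := hqc (ENNReal.ofReal δ) (ENNReal.ofReal_pos.2 hδ)
  obtain ⟨φ, hφ, hφf, hφB⟩ :=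
    exists_continuous_eqOn_abs_le hGo.isClosed_compl hcont hB₀ fun x _ => hB x
  refine ⟨φ, hφ, ⟨B, hφB⟩, fun μ _ hdom => ?_⟩
  have hμG : μ.real G ≤ M * δ := measureReal_le_of_le_mul hM (hdom G hGo.measurableSet) hcG
  have hdiff : ∀ x ∈ G, ‖f x - φ x‖ ≤ 2 * B := fun x _ => by
    rw [Real.norm_eq_abs, two_mul]
    exact (abs_sub _ _).trans (add_le_add (hB x) (hφB x))
  have hfint : Integrable f μ :=
    .of_bound hf.aestronglyMeasurable B (ae_of_all _ fun x => hB x)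
  have hφint : Integrable φ μ :=
    .of_bound hφ.aestronglyMeasurable B (ae_of_all _ fun x => hφB x)
  calc dist (∫ x, f x ∂μ) (∫ x, φ x ∂μ)
      ≤ 2 * B * μ.real G := by
        rw [dist_eq_norm]
        exact norm_integral_sub_le_of_eqOn_compl hfint hφint (measure_lt_top _ _)
          hφf.symm hdiff
    _ ≤ 2 * B * (M * δ) := by gcongr
    _ ≤ η := by rw [← mul_assoc]; exact hδη.le

/-- Abstract quasicontinuity argument from the proof of Theorem 3: if the measures `ν_j`, `ν`
are uniformly dominated by `M·c`, `u` is bounded, Borel and `c`-quasicontinuous, and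
`∫ φ dν_j → ∫ φ dν` for every bounded continuous `φ`, then `∫ g·u dν_j → ∫ g·u dν`
for every bounded continuous `g`. -/
theorem stmt8 {X : Type*} [MetricSpace X] [MeasurableSpace X] [BorelSpace X]
    (c : Set X → ENNReal) (M : ℝ) (hM : 0 ≤ M)
    (ν : Measure X) (νs : ℕ → Measure X)
    (hν : IsFiniteMeasure ν) (hνs : ∀ j, IsFiniteMeasure (νs j))
    (hdomν : ∀ A : Set X, MeasurableSet A → ν A ≤ ENNReal.ofReal M * c A)
    (hdomνs : ∀ j, ∀ A : Set X, MeasurableSet A → νs j A ≤ ENNReal.ofReal M * c A)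
    (u : X → ℝ) (hu : Measurable u) (B : ℝ) (hB : ∀ x, |u x| ≤ B)
    (huqc : QuasiContinuous c u)
    (hconv : ∀ φ : X → ℝ, Continuous φ → (∃ b : ℝ, ∀ x, |φ x| ≤ b) →
      Tendsto (fun j => ∫ x, φ x ∂(νs j)) atTop (nhds (∫ x, φ x ∂ν)))
    (g : X → ℝ) (hg : Continuous g) (hgb : ∃ b : ℝ, ∀ x, |g x| ≤ b) :
    Tendsto (fun j => ∫ x, g x * u x ∂(νs j)) atTop (nhds (∫ x, g x * u x ∂ν)) := by
  obtain ⟨b, hb⟩ := hgb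
  have hgub : ∃ C, ∀ x, |g x * u x| ≤ C := ⟨b * B, fun x => by
    rw [abs_mul]
    exact mul_le_mul (hb x) (hB x) (abs_nonneg _) ((abs_nonneg _).trans (hb x))⟩
  refine Tendsto.of_forall_approx fun ε hε => ?_
  obtain ⟨φ, hφ, hφb, happrox⟩ := (huqc.continuous_mul hg).exists_continuous_dist_integral_le
    hM (hg.measurable.mul hu) hgub hε
  exact ⟨_, _, hconv φ hφ hφb, .of_forall fun j => happrox (νs j) (hνs j) (hdomνs j),
    (dist_comm _ _).trans_le (happrox ν hν hdomν)⟩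
end
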